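/- Let U : ℂ → ℂ be smooth and α ∈ ℂ. Set V(z) := U(z)·U(-z) and V₁ := 2D_{z̄}U. Then for every smooth u = (u₁,u₂) : ℂ → ℂ² and every z ∈ ℂ, the composition D(-α)(D(α)u) has components: first component (2D_{z̄})²u₁(z) - α²V(z)u₁(z) + α·V₁(z)·u₂(z), and second component (2D_{z̄})²u₂(z) - α²V(z)u₂(z) - α·V₁(-z)·u₁(z). In other words, D(-α)D(α) = ((2D_{z̄})² - α²V)⊗I_{ℂ²} + R(α), where R(α) is multiplication by the off-diagonal matrix with entries R₁₂(z) = αV₁(z) and R₂₁(z) = -αV₁(-z). -/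

import Mathlib

/-!
Expanding `D(-α)D(α)u` componentwise, the product of the two off-diagonal potentials gives the
diagonal term `-α²U(z)U(-z)`, and the first-order terms `±αU(±z)·2D_{z̄}u_j` of the two factors
cancel, so only the Leibniz term in which `2D_{z̄}` falls on the potential survives. In the second
component that potential is `U(-·)`, and the chain rule for `w ↦ -w` gives
`2D_{z̄}[U(-·)](z) = -V₁(-z)`, whence the sign of `R₂₁`.
-/

noncomputable def Dbar2 (f : ℂ → ℂ) (z : ℂ) : ℂ :=
  Complex.I⁻¹ * (fderiv ℝ f z 1 + Complex.I * fderiv ℝ f z Complex.I)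

noncomputable def Dop (U : ℂ → ℂ) (α : ℂ) (u : ℂ → ℂ × ℂ) (z : ℂ) : ℂ × ℂ :=
  (Dbar2 (fun w => (u w).1) z + α * U z * (u z).2,
   α * U (-z) * (u z).1 + Dbar2 (fun w => (u w).2) z)

section Dbar2

variable {f g : ℂ → ℂ} {z : ℂ}

theorem Dbar2_add (hf : DifferentiableAt ℝ f z) (hg : DifferentiableAt ℝ g z) :
    Dbar2 (fun w => f w + g w) z = Dbar2 f z + Dbar2 g z := by
  simp only [Dbar2, fderiv_fun_add hf hg, add_apply]
  ring

theorem Dbar2_const_mul (hf : DifferentiableAt ℝ f z) (c : ℂ) :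
    Dbar2 (fun w => c * f w) z = c * Dbar2 f z := by
  simp only [Dbar2, fderiv_const_mul hf c, smul_apply, smul_eq_mul]
  ring

theorem Dbar2_mul (hf : DifferentiableAt ℝ f z) (hg : DifferentiableAt ℝ g z) :
    Dbar2 (fun w => f w * g w) z = Dbar2 f z * g z + f z * Dbar2 g z := by
  simp only [Dbar2, fderiv_fun_mul hf hg, add_apply, smul_apply, smul_eq_mul]
  ring

theorem Dbar2_comp_neg : Dbar2 (fun w => f (-w)) z = -Dbar2 f (-z) := by
  have hfderiv : fderiv ℝ (fun w => f (-w)) z = -fderiv ℝ f (-z) := by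
    simpa using fderiv_comp_smul (f := f) (x := z) (-1 : ℝ)
  simp only [Dbar2, hfderiv, neg_apply]
  ring

theorem ContDiff.Dbar2 {m n : WithTop ℕ∞} (hf : ContDiff ℝ n f) (hmn : m + 1 ≤ n) :
    ContDiff ℝ m (Dbar2 f) := by
  have hd : ContDiff ℝ m (fderiv ℝ f) := hf.fderiv_right hmn
  exact contDiff_const.mul ((hd.clm_apply contDiff_const).add
    (contDiff_const.mul (hd.clm_apply contDiff_const)))

end Dbar2

/-- the factorization `D(-α)D(α) = ((2D_{z̄})² - α²V) ⊗ I + R(α)`, with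
`V(z) = U(z)U(-z)`, `V₁ = 2D_{z̄}U`, and `R(α)` the off-diagonal matrix
with entries `R₁₂(z) = αV₁(z)`, `R₂₁(z) = -αV₁(-z)`. -/
theorem D_neg_D_factorization
    (U : ℂ → ℂ) (hU : ContDiff ℝ (⊤ : ℕ∞) U) (α : ℂ)
    (u : ℂ → ℂ × ℂ) (hu : ContDiff ℝ (⊤ : ℕ∞) u) (z : ℂ) :
    Dop U (-α) (fun w => Dop U α u w) z =
      (Dbar2 (fun w => Dbar2 (fun w' => (u w').1) w) z
          - α ^ 2 * (U z * U (-z)) * (u z).1 + α * Dbar2 U z * (u z).2,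
       Dbar2 (fun w => Dbar2 (fun w' => (u w').2) w) z
          - α ^ 2 * (U z * U (-z)) * (u z).2 - α * Dbar2 U (-z) * (u z).1) := by
  have h2 : (1 + 1 : WithTop ℕ∞) ≤ (⊤ : ℕ∞) := WithTop.coe_le_coe.2 le_top
  have hU' : Differentiable ℝ U := hU.differentiable (by simp)
  have hUneg : Differentiable ℝ (fun w => U (-w)) := hU'.comp differentiable_id.neg
  have hu₁ : ContDiff ℝ (⊤ : ℕ∞) (fun w => (u w).1) := contDiff_fst.comp hu
  have hu₂ : ContDiff ℝ (⊤ : ℕ∞) (fun w => (u w).2) := contDiff_snd.comp hu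
  have hDu₁ : Differentiable ℝ (Dbar2 fun w => (u w).1) :=
    (hu₁.Dbar2 h2).differentiable one_ne_zero
  have hDu₂ : Differentiable ℝ (Dbar2 fun w => (u w).2) :=
    (hu₂.Dbar2 h2).differentiable one_ne_zero
  have hu₁' : Differentiable ℝ (fun w => (u w).1) := hu₁.differentiable (by simp)
  have hu₂' : Differentiable ℝ (fun w => (u w).2) := hu₂.differentiable (by simp)
  refine Prod.ext ?_ ?_
  · simp only [Dop]
    rw [Dbar2_add (hDu₁ z) (((hU' z).const_mul α).fun_mul (hu₂' z)),
      Dbar2_mul ((hU' z).const_mul α) (hu₂' z), Dbar2_const_mul (hU' z)]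
    ring
  · simp only [Dop]
    rw [Dbar2_add (((hUneg z).const_mul α).fun_mul (hu₁' z)) (hDu₂ z),
      Dbar2_mul ((hUneg z).const_mul α) (hu₁' z), Dbar2_const_mul (hUneg z), Dbar2_comp_neg]
    ring
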